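/- Let ℓ ≥ 1, λ₁ > 0, λ₂ > 0, let H_X and H_Y be real Hilbert spaces, let ŵ_μ, ψ₁, …, ψ_ℓ ∈ H_X, let ŵ_ν, χ₁, …, χ_ℓ ∈ H_Y, let c₁, …, c_ℓ ∈ ℝ, and let Φ₁, …, Φ_ℓ ∈ ℝ^ℓ. Define Q ∈ ℝ^{ℓ×ℓ} by Q_{ij} = ⟨ψ_i, ψ_j⟩ + ⟨χ_i, χ_j⟩, z_j = ⟨ŵ_μ, ψ_j⟩ + ⟨ŵ_ν, χ_j⟩ − 2λ₂ c_j, and q² = ‖ŵ_μ‖² + ‖ŵ_ν‖². Assume there exists at least one primal-feasible triple (u, v, B), i.e., u ∈ H_X, v ∈ H_Y, B a positive semidefinite ℓ×ℓ matrix with c_j − ⟨u, ψ_j⟩ − ⟨v, χ_j⟩ = Φ_jᵀ B Φ_j for all j ∈ [ℓ]. Then the supremum of ⟨u, ŵ_μ⟩ + ⟨v, ŵ_ν⟩ − λ₁ tr(B) − λ₂(‖u‖² + ‖v‖²) over primal-feasible triples equals the infimum of (1/(4λ₂)) γᵀ Q γ − (1/(2λ₂)) Σ_{j=1}^ℓ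 γ_j z_j + q²/(4λ₂) over all γ ∈ ℝ^ℓ satisfying Σ_{j=1}^ℓ γ_j Φ_j Φ_jᵀ + λ₁·Id ⪰ 0. -/

import Mathlib

/-!
Weak duality is completing the square in `u` and `v`, together with `tr (B M(γ)) ≥ 0` for the
positive semidefinite matrices `B` and `M(γ) = ∑ γⱼ Φⱼ Φⱼᵀ + λ₁ Id`.

For the converse, `γ = 0` is a strictly feasible (Slater) point of the dual, so the convex set of
perturbations `(U, y₁, y₂, t)` of the dual (constraint `M(γ) + U ⪰ 0`, data `ŵ_μ + y₁`,
`ŵ_ν + y₂`, value at most `t`) has nonempty interior, and it does not contain `(0, 0, 0, d)` in its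
interior, `d` being the dual infimum. A supporting hyperplane there has a negative `t`-coefficient
(Slater again); after normalisation and the Riesz representation on `H_X` and `H_Y` it becomes a
positive semidefinite `B` and vectors `u`, `v` such that
`d + tr (B M(γ)) + ⟨u, y₁⟩ + ⟨v, y₂⟩` is at most the perturbed dual value for all `γ, y₁, y₂`.
Choosing the shifts so that the perturbed dual value no longer depends on `γ` except linearly shows
that `(u, v, B)` is primal feasible with value at least `d`.
-/

open Matrix Set Filter Topology
open scoped InnerProductSpace

theorem geometric_hahn_banach_of_notMem_interior {E : Type*} [TopologicalSpace E]
    [AddCommGroup E] [Module ℝ E] [IsTopologicalAddGroup E] [ContinuousSMul ℝ E]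
    {s : Set E} {x : E} (hs : Convex ℝ s) (hint : (interior s).Nonempty) (hx : x ∉ interior s) :
    ∃ f : StrongDual ℝ E, (∀ a ∈ s, f a ≤ f x) ∧ ∀ a ∈ interior s, f a < f x := by
  obtain ⟨f, hf⟩ := geometric_hahn_banach_open_point hs.interior isOpen_interior hx
  have hcl : closure (interior s) ⊆ {a | f a ≤ f x} :=
    closure_minimal (fun a ha => (hf a ha).le) (isClosed_le f.continuous continuous_const)
  rw [hs.closure_interior_eq_closure_of_nonempty_interior hint] at hcl
  exact ⟨f, fun a ha => hcl (subset_closure ha), hf⟩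

lemma nonneg_of_forall_le_mul {K b : ℝ} (h : ∀ s : ℝ, 0 ≤ s → K ≤ s * b) : 0 ≤ b := by
  by_contra! hb
  have := h ((|K| + 1) / -b) (div_nonneg (by positivity) (by linarith))
  rw [div_mul_eq_mul_div, div_neg, mul_div_cancel_right₀ _ hb.ne] at this
  linarith [neg_abs_le K]

lemma eq_zero_of_forall_le_dotProduct {n : Type*} [Fintype n] {K : ℝ} {r : n → ℝ}
    (h : ∀ γ, K ≤ γ ⬝ᵥ r) : r = 0 := by
  have : 0 ≤ -(r ⬝ᵥ r) := nonneg_of_forall_le_mul fun s _ => by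
    simpa [smul_dotProduct] using h (-(s • r))
  exact dotProduct_self_eq_zero.mp (le_antisymm (by linarith) (dotProduct_self_star_nonneg r))

lemma inner_sub_mul_norm_sq_le {E : Type*} [NormedAddCommGroup E] [InnerProductSpace ℝ E]
    {lam : ℝ} (hlam : 0 < lam) (u x : E) : ⟪u, x⟫_ℝ - lam * ‖u‖ ^ 2 ≤ ‖x‖ ^ 2 / (4 * lam) := by
  have := sq_nonneg ‖x - (2 * lam) • u‖
  rw [norm_sub_sq_real, real_inner_smul_right, norm_smul, Real.norm_of_nonneg (by positivity),
    real_inner_comm] at this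
  rw [le_div_iff₀ (by positivity)]
  nlinarith

lemma norm_smul_add_smul_sq_le {E : Type*} [NormedAddCommGroup E] [InnerProductSpace ℝ E]
    {a b : ℝ} (ha : 0 ≤ a) (hb : 0 ≤ b) (hab : a + b = 1) (x y : E) :
    ‖a • x + b • y‖ ^ 2 ≤ a * ‖x‖ ^ 2 + b * ‖y‖ ^ 2 :=
  (convexOn_univ_norm.pow (fun _ _ => norm_nonneg _) 2).2 trivial trivial ha hb hab

lemma convexCombo_sub_sum_smul_add {ι E : Type*} [Fintype ι] [AddCommGroup E] [Module ℝ E]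
    {a b : ℝ} (hab : a + b = 1) (w y y' : E) (g : ι → E) (γ γ' : ι → ℝ) :
    w - ∑ j, (a • γ + b • γ') j • g j + (a • y + b • y') =
      a • (w - ∑ j, γ j • g j + y) + b • (w - ∑ j, γ' j • g j + y') := by
  obtain rfl : b = 1 - a := by linarith
  simp only [Pi.add_apply, Pi.smul_apply, smul_eq_mul, add_smul, mul_smul,
    Finset.sum_add_distrib, ← Finset.smul_sum]
  module

lemma ContinuousLinearMap.exists_eq_add_inner_add_inner {M X Y : Type*} [TopologicalSpace M]
    [AddCommGroup M] [Module ℝ M] [NormedAddCommGroup X] [InnerProductSpace ℝ X] [CompleteSpace X]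
    [NormedAddCommGroup Y] [InnerProductSpace ℝ Y] [CompleteSpace Y]
    (f : StrongDual ℝ (M × X × Y × ℝ)) :
    ∃ (φ : M →ₗ[ℝ] ℝ) (x : X) (y : Y), ∀ U y1 y2 t,
      f (U, y1, y2, t) = φ U + ⟪x, y1⟫_ℝ + ⟪y, y2⟫_ℝ + t * f (0, 0, 0, 1) := by
  refine ⟨(f.comp (.inl ℝ M (X × Y × ℝ))).toLinearMap,
    (InnerProductSpace.toDual ℝ X).symm (f.comp ((ContinuousLinearMap.inr ℝ M _).comp
      (.inl ℝ X (Y × ℝ)))),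
    (InnerProductSpace.toDual ℝ Y).symm (f.comp ((ContinuousLinearMap.inr ℝ M _).comp
      ((ContinuousLinearMap.inr ℝ X _).comp (.inl ℝ Y ℝ)))), fun U y1 y2 t => ?_⟩
  simp only [InnerProductSpace.toDual_symm_apply, ContinuousLinearMap.coe_coe,
    ContinuousLinearMap.comp_apply, ContinuousLinearMap.inl_apply, ContinuousLinearMap.inr_apply]
  rw [← smul_eq_mul, ← map_smul, ← map_add, ← map_add, ← map_add]
  simp

namespace Matrix

variable {n : Type*} [Fintype n]

lemma abs_dotProduct_mulVec_le {U : Matrix n n ℝ} {r : ℝ} (hr : 0 ≤ r)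
    (hU : ∀ i k, |U i k| ≤ r) (x : n → ℝ) : |x ⬝ᵥ U *ᵥ x| ≤ r * Fintype.card n * (x ⬝ᵥ x) := by
  calc |x ⬝ᵥ U *ᵥ x| ≤ ∑ i, ∑ k, r * (|x i| * |x k|) := by
        simp only [dotProduct, mulVec, Finset.mul_sum]
        refine (Finset.abs_sum_le_sum_abs _ _).trans (Finset.sum_le_sum fun i _ => ?_)
        refine (Finset.abs_sum_le_sum_abs _ _).trans (Finset.sum_le_sum fun k _ => ?_)
        rw [abs_mul, abs_mul, mul_left_comm]
        exact mul_le_mul_of_nonneg_right (hU i k) (by positivity)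
    _ = r * (∑ i, |x i|) ^ 2 := by
        rw [sq, Finset.sum_mul_sum, Finset.mul_sum]; simp_rw [Finset.mul_sum]
    _ ≤ r * (Fintype.card n * ∑ i, |x i| ^ 2) :=
        mul_le_mul_of_nonneg_left sq_sum_le_card_mul_sum_sq hr
    _ = r * Fintype.card n * (x ⬝ᵥ x) := by simp [dotProduct, sq, mul_assoc]

open scoped MatrixOrder in
lemma PosSemidef.trace_mul_nonneg {A B : Matrix n n ℝ}
    (hA : A.PosSemidef) (hB : B.PosSemidef) : 0 ≤ (A * B).trace := by
  classical
  obtain ⟨C, rfl⟩ := CStarAlgebra.nonneg_iff_eq_star_mul_self.mp hA.nonneg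
  rw [star_eq_conjTranspose, Matrix.mul_assoc, trace_mul_comm]
  simpa [Matrix.mul_assoc] using (hB.mul_mul_conjTranspose_same C).trace_nonneg

variable [DecidableEq n]

lemma exists_isHermitian_trace_mul_eq (φ : Matrix n n ℝ →ₗ[ℝ] ℝ) :
    ∃ B : Matrix n n ℝ, B.IsHermitian ∧
      ∀ M : Matrix n n ℝ, M.IsHermitian → φ M = (B * M).trace := by
  set A : Matrix n n ℝ := of fun i k => φ (single k i 1)
  have hA : ∀ M, φ M = (A * M).trace := by
    intro M
    conv_lhs => rw [matrix_eq_sum_single M]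
    simp only [map_sum, trace, diag, mul_apply, A, of_apply]
    rw [Finset.sum_comm]
    refine Finset.sum_congr rfl fun i _ => Finset.sum_congr rfl fun k _ => ?_
    rw [mul_comm, ← smul_eq_mul, ← map_smul, smul_single, smul_eq_mul, mul_one]
  refine ⟨(1 / 2 : ℝ) • (A + Aᵀ), ?_, fun M hM => ?_⟩
  · simp [IsHermitian, conjTranspose_eq_transpose_of_trivial, add_comm]
  · have hMT : Mᵀ = M := by rw [← conjTranspose_eq_transpose_of_trivial]; exact hM
    have : (Aᵀ * M).trace = (A * M).trace := by
      rw [← trace_transpose, transpose_mul, transpose_transpose, hMT, trace_mul_comm]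
    rw [smul_mul_assoc, trace_smul, add_mul, trace_add, this, ← hA, smul_eq_mul]
    ring
end Matrix

structure SOSProblem (l : ℕ) (HX HY : Type*) where
  lam1 : ℝ
  lam2 : ℝ
  wmu : HX
  psi : Fin l → HX
  wnu : HY
  chi : Fin l → HY
  c : Fin l → ℝ
  Phi : Fin l → Fin l → ℝ

namespace SOSProblem

variable {l : ℕ} {HX HY : Type*} (P : SOSProblem l HX HY)

def dualMatrix (γ : Fin l → ℝ) : Matrix (Fin l) (Fin l) ℝ :=
  ∑ j, γ j • vecMulVec (P.Phi j) (P.Phi j) + P.lam1 • 1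

lemma isHermitian_dualMatrix (γ : Fin l → ℝ) : (P.dualMatrix γ).IsHermitian := by
  ext i k
  simp [dualMatrix, Matrix.sum_apply, vecMulVec_apply, one_apply, eq_comm, mul_comm]

lemma dualMatrix_zero : P.dualMatrix 0 = P.lam1 • 1 := by
  simp [dualMatrix]

lemma trace_mul_dualMatrix (B : Matrix (Fin l) (Fin l) ℝ) (γ : Fin l → ℝ) :
    (B * P.dualMatrix γ).trace = ∑ j, γ j * (P.Phi j ⬝ᵥ B *ᵥ P.Phi j) + P.lam1 * B.trace := by
  simp [dualMatrix, Matrix.mul_add, Matrix.mul_sum, trace_sum, mul_vecMulVec, trace_vecMulVec,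
    dotProduct_comm]

lemma dualMatrix_convexCombo {a b : ℝ} (hab : a + b = 1) (γ γ' : Fin l → ℝ) :
    P.dualMatrix (a • γ + b • γ') = a • P.dualMatrix γ + b • P.dualMatrix γ' := by
  obtain rfl : b = 1 - a := by linarith
  simp only [dualMatrix, Pi.add_apply, Pi.smul_apply, smul_eq_mul, add_smul, mul_smul,
    Finset.sum_add_distrib, ← Finset.smul_sum]
  module

variable [NormedAddCommGroup HX] [InnerProductSpace ℝ HX] [NormedAddCommGroup HY]
  [InnerProductSpace ℝ HY]

def objective (u : HX) (v : HY) (B : Matrix (Fin l) (Fin l) ℝ) : ℝ :=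
  ⟪u, P.wmu⟫_ℝ + ⟪v, P.wnu⟫_ℝ - P.lam1 * B.trace - P.lam2 * (‖u‖ ^ 2 + ‖v‖ ^ 2)

def primalValues : Set ℝ :=
  {r | ∃ (u : HX) (v : HY) (B : Matrix (Fin l) (Fin l) ℝ), B.PosSemidef ∧
    (∀ j, P.c j - ⟪u, P.psi j⟫_ℝ - ⟪v, P.chi j⟫_ℝ = P.Phi j ⬝ᵥ B *ᵥ P.Phi j) ∧
    r = P.objective u v B}

/-- The dual objective of the problem with data `wmu + y1`, `wnu + y2` in place of `wmu`, `wnu`. -/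
noncomputable def dualValue (γ : Fin l → ℝ) (y1 : HX) (y2 : HY) : ℝ :=
  ∑ j, γ j * P.c j +
    (‖P.wmu - ∑ j, γ j • P.psi j + y1‖ ^ 2 + ‖P.wnu - ∑ j, γ j • P.chi j + y2‖ ^ 2) / (4 * P.lam2)

noncomputable def dualValues : Set ℝ :=
  {r | ∃ γ, (P.dualMatrix γ).PosSemidef ∧ r = P.dualValue γ 0 0}

lemma dualValue_zero_zero_eq (hlam2 : P.lam2 ≠ 0) (γ : Fin l → ℝ) :
    P.dualValue γ 0 0 =
      1 / (4 * P.lam2) * (γ ⬝ᵥ (of fun i j => ⟪P.psi i, P.psi j⟫_ℝ + ⟪P.chi i, P.chi j⟫_ℝ) *ᵥ γ)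
        - 1 / (2 * P.lam2) *
          ∑ j, γ j * (⟪P.wmu, P.psi j⟫_ℝ + ⟪P.wnu, P.chi j⟫_ℝ - 2 * P.lam2 * P.c j)
        + (‖P.wmu‖ ^ 2 + ‖P.wnu‖ ^ 2) / (4 * P.lam2) := by
  have hgram : (of fun i j => ⟪P.psi i, P.psi j⟫_ℝ + ⟪P.chi i, P.chi j⟫_ℝ) =
      gram ℝ P.psi + gram ℝ P.chi := rfl
  have hquad := star_dotProduct_gram_mulVec (𝕜 := ℝ) P.psi γ γ
  have hquad' := star_dotProduct_gram_mulVec (𝕜 := ℝ) P.chi γ γ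
  simp only [star_trivial, real_inner_self_eq_norm_sq] at hquad hquad'
  have hlin : ∑ j, γ j * (⟪P.wmu, P.psi j⟫_ℝ + ⟪P.wnu, P.chi j⟫_ℝ - 2 * P.lam2 * P.c j) =
      ⟪P.wmu, ∑ j, γ j • P.psi j⟫_ℝ + ⟪P.wnu, ∑ j, γ j • P.chi j⟫_ℝ
        - 2 * P.lam2 * ∑ j, γ j * P.c j := by
    simp only [inner_sum, real_inner_smul_right, Finset.mul_sum, ← Finset.sum_add_distrib,
      ← Finset.sum_sub_distrib]
    exact Finset.sum_congr rfl fun j _ => by ring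
  rw [hgram, add_mulVec, dotProduct_add, hquad, hquad', hlin, dualValue, add_zero, add_zero,
    norm_sub_sq_real, norm_sub_sq_real]
  field_simp
  ring

theorem objective_le_dualValue (hlam2 : 0 < P.lam2) {u : HX} {v : HY}
    {B : Matrix (Fin l) (Fin l) ℝ} (hB : B.PosSemidef)
    (hfeas : ∀ j, P.c j - ⟪u, P.psi j⟫_ℝ - ⟪v, P.chi j⟫_ℝ = P.Phi j ⬝ᵥ B *ᵥ P.Phi j)
    {γ : Fin l → ℝ} (hγ : (P.dualMatrix γ).PosSemidef) :
    P.objective u v B ≤ P.dualValue γ 0 0 := by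
  have hc : ∑ j, γ j * P.c j = ⟪u, ∑ j, γ j • P.psi j⟫_ℝ + ⟪v, ∑ j, γ j • P.chi j⟫_ℝ
      + ∑ j, γ j * (P.Phi j ⬝ᵥ B *ᵥ P.Phi j) := by
    simp only [inner_sum, real_inner_smul_right, ← Finset.sum_add_distrib]
    exact Finset.sum_congr rfl fun j _ => by rw [← hfeas j]; ring
  have hu := inner_sub_mul_norm_sq_le hlam2 u (P.wmu - ∑ j, γ j • P.psi j)
  have hv := inner_sub_mul_norm_sq_le hlam2 v (P.wnu - ∑ j, γ j • P.chi j)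
  have htr := hB.trace_mul_nonneg hγ
  rw [trace_mul_dualMatrix] at htr
  rw [inner_sub_right] at hu hv
  simp only [objective, dualValue, add_zero]
  rw [add_div]
  linarith

/-- The set `𝒜` of the Slater-type proof of strong duality (Boyd–Vandenberghe, §5.3.2) for the
dual problem, with the matrix constraint relaxed by `U` and the data shifted by `y1`, `y2`. The
constraint is stated as a quadratic-form inequality, so that `U` may be any matrix (not only a
symmetric one) and the set has nonempty interior. -/
def dualPerturbationSet : Set (Matrix (Fin l) (Fin l) ℝ × HX × HY × ℝ) :=
  {a | ∃ γ, (∀ x, 0 ≤ x ⬝ᵥ (P.dualMatrix γ + a.1) *ᵥ x) ∧ P.dualValue γ a.2.1 a.2.2.1 ≤ a.2.2.2}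

lemma dualValue_convexCombo_le (hlam2 : 0 ≤ P.lam2) {a b : ℝ} (ha : 0 ≤ a) (hb : 0 ≤ b)
    (hab : a + b = 1) (γ γ' : Fin l → ℝ) (y1 y1' : HX) (y2 y2' : HY) :
    P.dualValue (a • γ + b • γ') (a • y1 + b • y1') (a • y2 + b • y2') ≤
      a * P.dualValue γ y1 y2 + b * P.dualValue γ' y1' y2' := by
  have hlin : ∑ j, (a • γ + b • γ') j * P.c j = a * ∑ j, γ j * P.c j + b * ∑ j, γ' j * P.c j := by
    simp only [Pi.add_apply, Pi.smul_apply, smul_eq_mul, add_mul, Finset.sum_add_distrib,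
      Finset.mul_sum, mul_assoc]
  have hX := norm_smul_add_smul_sq_le ha hb hab (P.wmu - ∑ j, γ j • P.psi j + y1)
    (P.wmu - ∑ j, γ' j • P.psi j + y1')
  have hY := norm_smul_add_smul_sq_le ha hb hab (P.wnu - ∑ j, γ j • P.chi j + y2)
    (P.wnu - ∑ j, γ' j • P.chi j + y2')
  simp only [dualValue]
  rw [convexCombo_sub_sum_smul_add hab, convexCombo_sub_sum_smul_add hab, hlin]
  calc _ ≤ a * ∑ j, γ j * P.c j + b * ∑ j, γ' j * P.c j +
        (a * (‖P.wmu - ∑ j, γ j • P.psi j + y1‖ ^ 2 + ‖P.wnu - ∑ j, γ j • P.chi j + y2‖ ^ 2) +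
          b * (‖P.wmu - ∑ j, γ' j • P.psi j + y1'‖ ^ 2 + ‖P.wnu - ∑ j, γ' j • P.chi j + y2'‖ ^ 2))
          / (4 * P.lam2) := by gcongr _ + ?_ / _; linarith
    _ = _ := by ring

lemma convex_dualPerturbationSet (hlam2 : 0 ≤ P.lam2) : Convex ℝ P.dualPerturbationSet := by
  rintro ⟨U, y1, y2, t⟩ ⟨γ, hγ, ht⟩ ⟨U', y1', y2', t'⟩ ⟨γ', hγ', ht'⟩ a b ha hb hab
  refine ⟨a • γ + b • γ', fun x => ?_, ?_⟩
  · have : P.dualMatrix (a • γ + b • γ') + (a • U + b • U') =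
        a • (P.dualMatrix γ + U) + b • (P.dualMatrix γ' + U') := by
      rw [P.dualMatrix_convexCombo hab]; module
    change 0 ≤ x ⬝ᵥ (P.dualMatrix _ + (a • U + b • U')) *ᵥ x
    rw [this, add_mulVec, smul_mulVec, smul_mulVec, dotProduct_add, dotProduct_smul,
      dotProduct_smul, smul_eq_mul, smul_eq_mul]
    exact add_nonneg (mul_nonneg ha (hγ x)) (mul_nonneg hb (hγ' x))
  · refine (P.dualValue_convexCombo_le hlam2 ha hb hab γ γ' y1 y1' y2 y2').trans ?_
    simp only [Prod.snd_add, Prod.smul_snd, smul_eq_mul]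
    gcongr

lemma mem_interior_dualPerturbationSet (hlam1 : 0 < P.lam1) :
    ((0, 0, 0, P.dualValue 0 0 0 + 1) : Matrix (Fin l) (Fin l) ℝ × HX × HY × ℝ) ∈
      interior P.dualPerturbationSet := by
  -- `l + 1` rather than `l`, so that `r > 0` also when `l = 0`
  set r := P.lam1 / (l + 1)
  have hr : 0 < r := by positivity
  have hrl : r * l ≤ P.lam1 := by
    rw [div_mul_eq_mul_div, div_le_iff₀ (by positivity)]
    nlinarith
  let N : Set (Matrix (Fin l) (Fin l) ℝ × HX × HY × ℝ) :=
    (⋂ i, ⋂ k, {a | |a.1 i k| < r}) ∩ {a | P.dualValue 0 a.2.1 a.2.2.1 < a.2.2.2}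
  have hN : IsOpen N := by
    refine (isOpen_iInter_of_finite fun i => isOpen_iInter_of_finite fun k =>
      isOpen_lt (by fun_prop) continuous_const).inter (isOpen_lt ?_ (by fun_prop))
    unfold dualValue
    fun_prop
  refine interior_maximal (t := N) ?_ hN ⟨by simpa using fun _ _ => hr, by simp⟩
  rintro ⟨U, y1, y2, t⟩ ⟨hU, ht⟩
  simp only [mem_iInter] at hU
  refine ⟨0, fun x => ?_, ht.le⟩
  have hb := abs_dotProduct_mulVec_le hr.le (fun i k => (hU i k).le) x
  have hxx : 0 ≤ x ⬝ᵥ x := dotProduct_self_star_nonneg x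
  simp only [Fintype.card_fin] at hb
  simp only [dualMatrix, Pi.zero_apply, zero_smul, Finset.sum_const_zero, zero_add, add_mulVec,
    smul_mulVec, one_mulVec, dotProduct_add, dotProduct_smul, smul_eq_mul]
  nlinarith [abs_le.mp hb, mul_le_mul_of_nonneg_right hrl hxx]

lemma notMem_interior_dualPerturbationSet {p : ℝ}
    (hp : ∀ γ, (P.dualMatrix γ).PosSemidef → p ≤ P.dualValue γ 0 0) :
    ((0, 0, 0, p) : Matrix (Fin l) (Fin l) ℝ × HX × HY × ℝ) ∉ interior P.dualPerturbationSet := by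
  intro h
  have hcont : Continuous fun s : ℝ =>
      ((0, 0, 0, p - s) : Matrix (Fin l) (Fin l) ℝ × HX × HY × ℝ) := by fun_prop
  have hev : ∀ᶠ s in 𝓝[>] (0 : ℝ),
      ((0, 0, 0, p - s) : Matrix (Fin l) (Fin l) ℝ × HX × HY × ℝ) ∈ P.dualPerturbationSet :=
    ((hcont.tendsto' 0 _ (by simp)).mono_left nhdsWithin_le_nhds).eventually
      (mem_interior_iff_mem_nhds.mp h)
  obtain ⟨s, ⟨γ, hγ, hval⟩, hs⟩ := (hev.and self_mem_nhdsWithin).exists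
  have hpsd : (P.dualMatrix γ).PosSemidef :=
    .of_dotProduct_mulVec_nonneg (P.isHermitian_dualMatrix γ) fun x => by simpa using hγ x
  have := hp γ hpsd
  linarith

theorem exists_supporting_multipliers [CompleteSpace HX] [CompleteSpace HY]
    (hlam1 : 0 < P.lam1) (hlam2 : 0 < P.lam2) {p : ℝ}
    (hp : ∀ γ, (P.dualMatrix γ).PosSemidef → p ≤ P.dualValue γ 0 0) :
    ∃ (B : Matrix (Fin l) (Fin l) ℝ) (u : HX) (v : HY), B.IsHermitian ∧
      ∀ a ∈ P.dualPerturbationSet, a.1.IsHermitian →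
        p + ⟪u, a.2.1⟫_ℝ + ⟪v, a.2.2.1⟫_ℝ ≤ a.2.2.2 + (B * a.1).trace := by
  have hint := P.mem_interior_dualPerturbationSet hlam1
  obtain ⟨f, hf, hf_int⟩ := geometric_hahn_banach_of_notMem_interior
    (P.convex_dualPerturbationSet hlam2.le) ⟨_, hint⟩ (P.notMem_interior_dualPerturbationSet hp)
  obtain ⟨φ, x, y, hf_apply⟩ := f.exists_eq_add_inner_add_inner
  set τ := f (0, 0, 0, 1)
  have hτ : τ < 0 := by
    have h0 := hp 0 (by simpa [dualMatrix_zero] using PosSemidef.one.smul hlam1.le)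
    have h1 := hf_int _ hint
    simp only [hf_apply, map_zero, inner_zero_right, zero_add] at h1
    nlinarith
  obtain ⟨A, hA, hφ⟩ := exists_isHermitian_trace_mul_eq φ
  refine ⟨τ⁻¹ • A, -τ⁻¹ • x, -τ⁻¹ • y, hA.smul (IsSelfAdjoint.all _), ?_⟩
  rintro ⟨U, y1, y2, t⟩ ha hU
  have key := hf _ ha
  simp only [hf_apply, map_zero, inner_zero_right, zero_add, hφ U hU] at key
  simp only [real_inner_smul_left, smul_mul_assoc, trace_smul, smul_eq_mul]
  rw [← sub_nonneg]
  have : t + τ⁻¹ * (A * U).trace - (p + -τ⁻¹ * ⟪x, y1⟫_ℝ + -τ⁻¹ * ⟪y, y2⟫_ℝ) =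
      τ⁻¹ * ((A * U).trace + ⟪x, y1⟫_ℝ + ⟪y, y2⟫_ℝ + t * τ - p * τ) := by
    have := hτ.ne
    field_simp
    ring
  rw [this]
  exact mul_nonneg_of_nonpos_of_nonpos (inv_nonpos.2 hτ.le) (by linarith)

lemma objective_mem_primalValues_of_multipliers (hlam2 : 0 < P.lam2) {p : ℝ}
    {B : Matrix (Fin l) (Fin l) ℝ} {u : HX} {v : HY} (hB : B.PosSemidef)
    (h : ∀ γ y1 y2, p + (B * P.dualMatrix γ).trace + ⟪u, y1⟫_ℝ + ⟪v, y2⟫_ℝ ≤ P.dualValue γ y1 y2) :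
    P.objective u v B ∈ P.primalValues ∧ p ≤ P.objective u v B := by
  set r : Fin l → ℝ := fun j => P.c j - ⟪u, P.psi j⟫_ℝ - ⟪v, P.chi j⟫_ℝ - P.Phi j ⬝ᵥ B *ᵥ P.Phi j
  -- with these shifts the perturbed dual value is `∑ γⱼ cⱼ + λ₂ (‖u‖² + ‖v‖²)`, affine in `γ`
  have hlag : ∀ γ, p - P.objective u v B ≤ γ ⬝ᵥ r := by
    intro γ
    have hγ := h γ (∑ j, γ j • P.psi j - P.wmu + (2 * P.lam2) • u)
      (∑ j, γ j • P.chi j - P.wnu + (2 * P.lam2) • v)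
    have e1 : P.wmu - ∑ j, γ j • P.psi j + (∑ j, γ j • P.psi j - P.wmu + (2 * P.lam2) • u) =
        (2 * P.lam2) • u := by abel
    have e2 : P.wnu - ∑ j, γ j • P.chi j + (∑ j, γ j • P.chi j - P.wnu + (2 * P.lam2) • v) =
        (2 * P.lam2) • v := by abel
    have hnorm : (‖(2 * P.lam2) • u‖ ^ 2 + ‖(2 * P.lam2) • v‖ ^ 2) / (4 * P.lam2) =
        P.lam2 * (‖u‖ ^ 2 + ‖v‖ ^ 2) := by
      rw [norm_smul, norm_smul, Real.norm_of_nonneg (by positivity)]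
      field_simp
      ring
    rw [dualValue, e1, e2, hnorm, trace_mul_dualMatrix] at hγ
    simp only [inner_add_right, inner_sub_right, inner_sum, real_inner_smul_right,
      real_inner_self_eq_norm_sq] at hγ
    change _ ≤ ∑ j, γ j * r j
    simp only [objective, r, mul_sub, Finset.sum_sub_distrib]
    linarith
  have hr : r = 0 := eq_zero_of_forall_le_dotProduct hlag
  refine ⟨⟨u, v, B, hB, fun j => ?_, rfl⟩, by simpa using hlag 0⟩
  have := congrFun hr j
  simp only [r, Pi.zero_apply] at this
  linarith

theorem exists_multipliers [CompleteSpace HX] [CompleteSpace HY]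
    (hlam1 : 0 < P.lam1) (hlam2 : 0 < P.lam2) {p : ℝ}
    (hp : ∀ γ, (P.dualMatrix γ).PosSemidef → p ≤ P.dualValue γ 0 0) :
    ∃ (B : Matrix (Fin l) (Fin l) ℝ) (u : HX) (v : HY), B.PosSemidef ∧
      ∀ γ y1 y2, p + (B * P.dualMatrix γ).trace + ⟪u, y1⟫_ℝ + ⟪v, y2⟫_ℝ ≤ P.dualValue γ y1 y2 := by
  obtain ⟨B, u, v, hB, hsupp⟩ := P.exists_supporting_multipliers hlam1 hlam2 hp
  refine ⟨B, u, v, .of_dotProduct_mulVec_nonneg hB fun x => ?_, fun γ y1 y2 => ?_⟩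
  · have hxx : ∀ s : ℝ, 0 ≤ s → (s • vecMulVec x x).PosSemidef := fun s hs => by
      simpa using (posSemidef_vecMulVec_self_star x).smul hs
    refine nonneg_of_forall_le_mul (K := p - (P.dualValue 0 0 0 + 1)) fun s hs => ?_
    have hmem : ((s • vecMulVec x x, 0, 0, P.dualValue 0 0 0 + 1) :
        Matrix (Fin l) (Fin l) ℝ × HX × HY × ℝ) ∈ P.dualPerturbationSet := by
      refine ⟨0, fun y => ?_, (lt_add_one _).le⟩
      rw [dualMatrix_zero]
      simpa using ((PosSemidef.one.smul hlam1.le).add (hxx s hs)).dotProduct_mulVec_nonneg y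
    have := hsupp _ hmem (hxx s hs).isHermitian
    simp only [inner_zero_right, add_zero, mul_smul_comm, trace_smul, mul_vecMulVec,
      trace_vecMulVec, smul_eq_mul] at this
    simp only [star_trivial, dotProduct_comm x]
    linarith
  · have := hsupp (-P.dualMatrix γ, y1, y2, P.dualValue γ y1 y2) ⟨γ, fun x => by simp, le_rfl⟩
      (P.isHermitian_dualMatrix γ).neg
    simp only [Matrix.mul_neg, trace_neg] at this
    linarith

theorem sSup_primalValues_eq_sInf_dualValues [CompleteSpace HX] [CompleteSpace HY]
    (hlam1 : 0 < P.lam1) (hlam2 : 0 < P.lam2) (hfeas : P.primalValues.Nonempty) :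
    sSup P.primalValues = sInf P.dualValues := by
  have hweak : ∀ r ∈ P.primalValues, ∀ d ∈ P.dualValues, r ≤ d := by
    rintro _ ⟨u, v, B, hB, hres, rfl⟩ _ ⟨γ, hγ, rfl⟩
    exact P.objective_le_dualValue hlam2 hB hres hγ
  have hd₀ : P.dualValue 0 0 0 ∈ P.dualValues :=
    ⟨0, by simpa [dualMatrix_zero] using PosSemidef.one.smul hlam1.le, rfl⟩
  obtain ⟨r₀, hr₀⟩ := hfeas
  have hp : ∀ γ, (P.dualMatrix γ).PosSemidef → sInf P.dualValues ≤ P.dualValue γ 0 0 :=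
    fun γ hγ => csInf_le ⟨r₀, fun d hd => hweak r₀ hr₀ d hd⟩ ⟨γ, hγ, rfl⟩
  obtain ⟨B, u, v, hB, hmult⟩ := P.exists_multipliers hlam1 hlam2 hp
  obtain ⟨hmem, hle⟩ := P.objective_mem_primalValues_of_multipliers hlam2 hB hmult
  exact le_antisymm (csSup_le ⟨r₀, hr₀⟩ fun r hr => le_csInf ⟨_, hd₀⟩ (hweak r hr))
    (hle.trans (le_csSup ⟨_, fun r hr => hweak r hr _ hd₀⟩ hmem))

end SOSProblem

theorem strong_duality_sos_ot_general
    (l : ℕ) (lam1 lam2 : ℝ) (hlam1 : 0 < lam1) (hlam2 : 0 < lam2)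
    {HX HY : Type*}
    [NormedAddCommGroup HX] [InnerProductSpace ℝ HX] [CompleteSpace HX]
    [NormedAddCommGroup HY] [InnerProductSpace ℝ HY] [CompleteSpace HY]
    (wmu : HX) (psi : Fin l → HX) (wnu : HY) (chi : Fin l → HY)
    (c : Fin l → ℝ) (Phi : Fin l → Fin l → ℝ)
    (Q : Matrix (Fin l) (Fin l) ℝ)
    (hQ : Q = Matrix.of fun i j => ⟪psi i, psi j⟫_ℝ + ⟪chi i, chi j⟫_ℝ)
    (z : Fin l → ℝ)
    (hz : ∀ j, z j = ⟪wmu, psi j⟫_ℝ + ⟪wnu, chi j⟫_ℝ - 2 * lam2 * c j)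
    (q2 : ℝ) (hq2 : q2 = ‖wmu‖ ^ 2 + ‖wnu‖ ^ 2)
    (hfeasible : ∃ (u : HX) (v : HY) (B : Matrix (Fin l) (Fin l) ℝ),
      B.PosSemidef ∧ ∀ j, c j - ⟪u, psi j⟫_ℝ - ⟪v, chi j⟫_ℝ =
        dotProduct (Phi j) (B.mulVec (Phi j))) :
    sSup {r : ℝ | ∃ (u : HX) (v : HY) (B : Matrix (Fin l) (Fin l) ℝ),
        B.PosSemidef ∧
        (∀ j, c j - ⟪u, psi j⟫_ℝ - ⟪v, chi j⟫_ℝ =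
          dotProduct (Phi j) (B.mulVec (Phi j))) ∧
        r = ⟪u, wmu⟫_ℝ + ⟪v, wnu⟫_ℝ - lam1 * B.trace
          - lam2 * (‖u‖ ^ 2 + ‖v‖ ^ 2)} =
    sInf {r : ℝ | ∃ γ : Fin l → ℝ,
        (∑ j, γ j • Matrix.vecMulVec (Phi j) (Phi j) +
          lam1 • (1 : Matrix (Fin l) (Fin l) ℝ)).PosSemidef ∧
        r = (1 / (4 * lam2)) * dotProduct γ (Q.mulVec γ)
          - (1 / (2 * lam2)) * ∑ j, γ j * z j + q2 / (4 * lam2)} := by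
  let P : SOSProblem l HX HY := ⟨lam1, lam2, wmu, psi, wnu, chi, c, Phi⟩
  obtain rfl : z = _ := funext hz
  subst hQ hq2
  obtain ⟨u, v, B, hB, hres⟩ := hfeasible
  refine (P.sSup_primalValues_eq_sInf_dualValues hlam1 hlam2 ⟨_, u, v, B, hB, hres, rfl⟩).trans
    (congrArg sInf (Set.ext fun r => exists_congr fun γ => and_congr_right fun _ => ?_))
  rw [P.dualValue_zero_zero_eq hlam2.ne']

/-- Strong duality between the finite-dimensional regularized
sum-of-squares problem and its dual semidefinite program, Theorem 8 of the paper. -/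
theorem strong_duality_sos_ot
    (l : ℕ) (hl : 1 ≤ l) (lam1 lam2 : ℝ) (hlam1 : 0 < lam1) (hlam2 : 0 < lam2)
    {HX HY : Type*}
    [NormedAddCommGroup HX] [InnerProductSpace ℝ HX] [CompleteSpace HX]
    [NormedAddCommGroup HY] [InnerProductSpace ℝ HY] [CompleteSpace HY]
    (wmu : HX) (psi : Fin l → HX) (wnu : HY) (chi : Fin l → HY)
    (c : Fin l → ℝ) (Phi : Fin l → Fin l → ℝ)
    (Q : Matrix (Fin l) (Fin l) ℝ)
    (hQ : Q = Matrix.of fun i j => ⟪psi i, psi j⟫_ℝ + ⟪chi i, chi j⟫_ℝ)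
    (z : Fin l → ℝ)
    (hz : ∀ j, z j = ⟪wmu, psi j⟫_ℝ + ⟪wnu, chi j⟫_ℝ - 2 * lam2 * c j)
    (q2 : ℝ) (hq2 : q2 = ‖wmu‖ ^ 2 + ‖wnu‖ ^ 2)
    (hfeasible : ∃ (u : HX) (v : HY) (B : Matrix (Fin l) (Fin l) ℝ),
      B.PosSemidef ∧ ∀ j, c j - ⟪u, psi j⟫_ℝ - ⟪v, chi j⟫_ℝ =
        dotProduct (Phi j) (B.mulVec (Phi j))) :
    sSup {r : ℝ | ∃ (u : HX) (v : HY) (B : Matrix (Fin l) (Fin l) ℝ),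
        B.PosSemidef ∧
        (∀ j, c j - ⟪u, psi j⟫_ℝ - ⟪v, chi j⟫_ℝ =
          dotProduct (Phi j) (B.mulVec (Phi j))) ∧
        r = ⟪u, wmu⟫_ℝ + ⟪v, wnu⟫_ℝ - lam1 * B.trace
          - lam2 * (‖u‖ ^ 2 + ‖v‖ ^ 2)} =
    sInf {r : ℝ | ∃ γ : Fin l → ℝ,
        (∑ j, γ j • Matrix.vecMulVec (Phi j) (Phi j) +
          lam1 • (1 : Matrix (Fin l) (Fin l) ℝ)).PosSemidef ∧
        r = (1 / (4 * lam2)) * dotProduct γ (Q.mulVec γ)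
          - (1 / (2 * lam2)) * ∑ j, γ j * z j + q2 / (4 * lam2)} :=
  strong_duality_sos_ot_general l lam1 lam2 hlam1 hlam2 wmu psi wnu chi c Phi Q hQ z hz q2 hq2
    hfeasible
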